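/- arXiv:1902.06324 — 10 statements merged into one kernel-verified Lean document; each statement's English description precedes it below -/
import Mathlib

section
/- Let k be an algebraically closed field and let f, g ∈ k[x₀,x₁,x₂] be irreducible homogeneous polynomials of positive total degree. If the complements ℙ² ∖ V(f) and ℙ² ∖ V(g) are isomorphic, i.e. if the degree-zero parts A_f and A_g of the localizations of k[x₀,x₁,x₂] away from f and away from g are isomorphic as k-algebras, then the total degree of f equals the total degree of g. -/
open MvPolynomial

attribute [local instance] MvPolynomial.gradedAlgebra

/-- The degree-zero part `A_f` of the localization of `k[x₀,x₁,x₂]` away from `f`,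
i.e. the coordinate ring of the affine variety `ℙ² ∖ V(f)`. -/
noncomputable abbrev AwayRing (k : Type) [Field k] (f : MvPolynomial (Fin 3) k) : Type :=
  HomogeneousLocalization.Away (homogeneousSubmodule (Fin 3) k) f

noncomputable instance (k : Type) [Field k] (f : MvPolynomial (Fin 3) k) :
    Algebra k (AwayRing k f) :=
  ((algebraMap (homogeneousSubmodule (Fin 3) k 0) (AwayRing k f)).comp
    (algebraMap k (homogeneousSubmodule (Fin 3) k 0))).toAlgebra


/-!
Write `A_f` for the degree-zero part of `k[x]_f`, where `f` is prime and homogeneous of degree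
`d > 0`. Every nonzero element of `A_f` is `a / f^m` with `a` homogeneous of degree `m d` and
`f ∤ a`; it is a unit iff `m = 0`, and `a / f^m ∣ b / f^n` iff `a ∣ b`. If `a / f^m` is
irreducible, no prime `p` divides `a` with multiplicity `> d`, since otherwise `p^d / f^(deg p)`
splits off as a non-unit factor. Hence an irreducible `u` dividing some power of an irreducible `v`
already divides `v^d`, while for `u = X_i^d / f` and `v = X_i X_j^(d-1) / f` no smaller exponent
works. So `d` is the least exponent with this purely multiplicative property of `A_f`, which is
therefore preserved by isomorphisms.
-/

namespace MvPolynomial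

section Domain

variable {σ R : Type*} [CommRing R]

theorem order_coe_le_totalDegree {φ : MvPolynomial σ R} (hφ : φ ≠ 0) :
    (φ : MvPowerSeries σ R).order ≤ φ.totalDegree := by
  obtain ⟨d, hd, hdeg⟩ := Finset.exists_mem_eq_sup _ (support_nonempty.2 hφ)
    fun s : σ →₀ ℕ => s.sum fun _ e => e
  rw [totalDegree, hdeg]
  exact MvPowerSeries.order_le (by rwa [coeff_coe, ← mem_support_iff])

theorem isHomogeneous_totalDegree_of_totalDegree_le_order {φ : MvPolynomial σ R}
    (h : (φ.totalDegree : ℕ∞) ≤ (φ : MvPowerSeries σ R).order) :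
    φ.IsHomogeneous φ.totalDegree := by
  intro d hd
  have hle : d.degree ≤ φ.totalDegree := le_totalDegree (mem_support_iff.2 hd)
  have hge : (φ : MvPowerSeries σ R).order ≤ d.degree :=
    MvPowerSeries.order_le (by rwa [coeff_coe])
  rw [Pi.one_def, ← Finsupp.degree_eq_weight_one]
  exact le_antisymm hle (by exact_mod_cast h.trans hge)

theorem IsHomogeneous.le_order {φ : MvPolynomial σ R} {n : ℕ} (h : φ.IsHomogeneous n) :
    (n : ℕ∞) ≤ (φ : MvPowerSeries σ R).order :=
  MvPowerSeries.nat_le_order fun d hd => by rw [coeff_coe]; exact h.coeff_eq_zero hd.ne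

variable [IsDomain R]

/-- Lowest and highest degrees both add under multiplication, so they agree on each factor. -/
theorem IsHomogeneous.of_mul_left {p q : MvPolynomial σ R} {n : ℕ}
    (h : (p * q).IsHomogeneous n) (hpq : p * q ≠ 0) : p.IsHomogeneous p.totalDegree := by
  have hq := right_ne_zero_of_mul hpq
  refine isHomogeneous_totalDegree_of_totalDegree_le_order
    ((ENat.add_le_add_iff_right (ENat.natCast_ne_top q.totalDegree)).1 ?_)
  calc ((p.totalDegree : ℕ) : ℕ∞) + q.totalDegree
      = n := by
        rw [← h.totalDegree hpq, totalDegree_mul_of_isDomain (left_ne_zero_of_mul hpq) hq]; rfl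
    _ ≤ (p : MvPowerSeries σ R).order + (q : MvPowerSeries σ R).order := by
      rw [← MvPowerSeries.order_mul, ← coe_mul]; exact h.le_order
    _ ≤ (p : MvPowerSeries σ R).order + q.totalDegree := by
      gcongr; exact order_coe_le_totalDegree hq

theorem IsHomogeneous.of_mul_of_left {p q : MvPolynomial σ R} {m n : ℕ}
    (h : (p * q).IsHomogeneous n) (hpq : p * q ≠ 0) (hp : p.IsHomogeneous m) :
    m ≤ n ∧ q.IsHomogeneous (n - m) := by
  have hq := (mul_comm p q ▸ h).of_mul_left (mul_comm p q ▸ hpq)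
  have hdeg := totalDegree_mul_of_isDomain (left_ne_zero_of_mul hpq) (right_ne_zero_of_mul hpq)
  rw [h.totalDegree hpq, hp.totalDegree (left_ne_zero_of_mul hpq)] at hdeg
  exact ⟨by omega, by rwa [hdeg, Nat.add_sub_cancel_left]⟩

theorem X_pow_dvd_X_pow_mul_X_pow {i j : σ} (hij : i ≠ j) {a b c : ℕ}
    (h : (X i ^ a : MvPolynomial σ R) ∣ X i ^ b * X j ^ c) : a ≤ b := by
  rw [X_pow_eq_monomial, X_pow_eq_monomial, X_pow_eq_monomial, monomial_mul, one_mul,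
    monomial_dvd_monomial] at h
  simpa [hij.symm] using h.1.resolve_left one_ne_zero i

theorem exists_not_dvd_X [Nontrivial σ] {f : MvPolynomial σ R} (hfp : Prime f) :
    ∃ i, ¬ f ∣ X i := by
  by_contra! hall
  obtain ⟨i, j, hij⟩ := exists_pair_ne σ
  exact hij (X_dvd_X.1 ((hfp.associated_of_dvd X_prime (hall i)).symm.trans
    (hfp.associated_of_dvd X_prime (hall j))).dvd)

end Domain

variable {σ k : Type*} [Field k]

theorem IsHomogeneous.isUnit {a : MvPolynomial σ k} (ha : a.IsHomogeneous 0) (ha0 : a ≠ 0) :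
    IsUnit a := by
  have ha_C := totalDegree_eq_zero_iff_eq_C.1 (ha.totalDegree ha0)
  rw [ha_C]
  exact (Ne.isUnit fun h => ha0 (by rw [ha_C, h, C_0])).map C

theorem isHomogeneous_zero_of_isUnit {a : MvPolynomial σ k} (ha : IsUnit a) :
    a.IsHomogeneous 0 := by
  rw [totalDegree_eq_zero_iff_eq_C.1 (isUnit_iff_totalDegree_of_isReduced.1 ha).2]
  exact isHomogeneous_C σ _

end MvPolynomial

theorem UniqueFactorizationMonoid.dvd_pow_of_dvd_pow_of_not_pow_succ_dvd {α : Type*}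
    [CommMonoidWithZero α] [UniqueFactorizationMonoid α] {a b : α} {j n : ℕ}
    (ha : a ≠ 0) (hab : a ∣ b ^ j) (h : ∀ p, Prime p → ¬ p ^ (n + 1) ∣ a) : a ∣ b ^ n := by
  refine induction_on_coprime (P := fun x => x ∣ a → x ∣ b ^ n) a (fun h0 => ?_)
    (fun hx _ => hx.dvd) (fun {p} i hp hpa => ?_) (fun hxy hx hy hxya => ?_) dvd_rfl
  · exact absurd (zero_dvd_iff.1 h0) ha
  · rcases Nat.eq_zero_or_pos i with rfl | hi
    · simp
    have hpb : p ∣ b := hp.dvd_of_dvd_pow ((dvd_pow_self p hi.ne').trans (hpa.trans hab))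
    have hin : i ≤ n := by
      by_contra! hni
      exact h p hp ((pow_dvd_pow p hni).trans hpa)
    exact (pow_dvd_pow_of_dvd hpb i).trans (pow_dvd_pow b hin)
  · exact hxy.mul_dvd (hx (dvd_of_mul_right_dvd hxya)) (hy (dvd_of_mul_left_dvd hxya))

namespace HomogeneousLocalization.Away

variable {ι A σ : Type*} [CommRing A] [SetLike σ A] [AddSubgroupClass σ A] [AddCommMonoid ι]
  [DecidableEq ι] {𝒜 : ι → σ} [GradedRing 𝒜] {f : A} {d : ι} (hf : f ∈ 𝒜 d)
include hf

theorem mk_mul {m n : ℕ} {a b : A} (ha : a ∈ 𝒜 (m • d)) (hb : b ∈ 𝒜 (n • d)) :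
    Away.mk 𝒜 hf m a ha * Away.mk 𝒜 hf n b hb =
      Away.mk 𝒜 hf (m + n) (a * b) (add_smul m n d ▸ SetLike.mul_mem_graded ha hb) := by
  ext
  simp [Localization.mk_mul, pow_add]

theorem mk_pow {m : ℕ} {a : A} (ha : a ∈ 𝒜 (m • d)) (j : ℕ) :
    Away.mk 𝒜 hf m a ha ^ j =
      Away.mk 𝒜 hf (m * j) (a ^ j)
        (by rw [mul_comm, mul_smul]; exact SetLike.pow_mem_graded j ha) := by
  ext
  simp [Localization.mk_pow, pow_mul]

theorem mk_one :
    Away.mk 𝒜 hf 0 1 (by rw [zero_smul]; exact SetLike.GradedOne.one_mem) = 1 := by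
  ext
  simp

theorem mk_zero {m : ℕ} : Away.mk 𝒜 hf m 0 (zero_mem _) = 0 := by
  ext
  simp [Localization.mk_zero _]

theorem mk_eq_mk_iff [IsDomain A] (hf0 : f ≠ 0) {m n : ℕ} {a b : A} (ha : a ∈ 𝒜 (m • d))
    (hb : b ∈ 𝒜 (n • d)) :
    Away.mk 𝒜 hf m a ha = Away.mk 𝒜 hf n b hb ↔ a * f ^ n = b * f ^ m := by
  rw [ext_iff_val, val_mk, val_mk, Localization.mk_eq_mk_iff, Localization.r_iff_exists]
  constructor
  · rintro ⟨⟨_, t, rfl⟩, h⟩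
    simpa [mul_comm] using mul_left_cancel₀ (pow_ne_zero t hf0) h
  · intro h
    exact ⟨1, by simpa [mul_comm] using h⟩

end HomogeneousLocalization.Away

def IrreducibleDvdPowBound (R : Type*) [Monoid R] (n : ℕ) : Prop :=
  ∀ u v : R, Irreducible u → Irreducible v → ∀ j, u ∣ v ^ j → u ∣ v ^ n

theorem IrreducibleDvdPowBound.of_mulEquiv {R S : Type*} [Monoid R] [Monoid S] (e : R ≃* S)
    {n : ℕ} (h : IrreducibleDvdPowBound R n) : IrreducibleDvdPowBound S n := by
  intro u v hu hv j huv
  have := h (e.symm u) (e.symm v) (hu.map e.symm) (hv.map e.symm) j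
    (by simpa only [map_pow] using map_dvd e.symm huv)
  simpa only [map_pow, MulEquiv.apply_symm_apply] using map_dvd e this

namespace MvPolynomial

variable {σ k : Type*} [Field k]

local notation "𝒜" => homogeneousSubmodule σ k

open HomogeneousLocalization

variable {f : MvPolynomial σ k} {d : ℕ}

theorem le_and_mem_of_mul_mem_homogeneousSubmodule (hd : 0 < d) {x y : MvPolynomial σ k}
    {i m : ℕ} (h : x * y ∈ 𝒜 (m • d)) (hxy : x * y ≠ 0) (hx : x ∈ 𝒜 (i • d)) :
    i ≤ m ∧ y ∈ 𝒜 ((m - i) • d) := by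
  obtain ⟨hle, hy⟩ := IsHomogeneous.of_mul_of_left h hxy hx
  exact ⟨Nat.le_of_mul_le_mul_right hle hd, by rwa [smul_eq_mul, Nat.sub_mul]⟩

variable (hf : f ∈ homogeneousSubmodule σ k d)
include hf

theorem not_dvd_of_isHomogeneous_of_lt {a : MvPolynomial σ k} {e : ℕ}
    (ha : a.IsHomogeneous e) (ha0 : a ≠ 0) (he : e < d) : ¬ f ∣ a := by
  rintro ⟨c, rfl⟩
  exact he.not_ge (ha.of_mul_of_left ha0 hf).1

theorem exponent_eq_of_awayMk_eq_awayMk (hfp : Prime f) {m n : ℕ} {a b : MvPolynomial σ k}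
    {ha : a ∈ 𝒜 (m • d)} {hb : b ∈ 𝒜 (n • d)} (hfa : ¬ f ∣ a) (hfb : ¬ f ∣ b)
    (h : Away.mk 𝒜 hf m a ha = Away.mk 𝒜 hf n b hb) : m = n := by
  have le_of_mul_pow_eq : ∀ {m n : ℕ} {a b : MvPolynomial σ k}, ¬ f ∣ b →
      a * f ^ n = b * f ^ m → n ≤ m := by
    intro m n a b hfb h
    by_contra! hmn
    have hb : b = a * f ^ (n - m) := mul_right_cancel₀ (pow_ne_zero m hfp.ne_zero) <| by
      rw [← h, mul_assoc, ← pow_add, Nat.sub_add_cancel hmn.le]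
    exact hfb (hb ▸ dvd_mul_of_dvd_right (dvd_pow_self f (Nat.sub_ne_zero_of_lt hmn)) a)
  replace h := (Away.mk_eq_mk_iff hf hfp.ne_zero ha hb).1 h
  exact le_antisymm (le_of_mul_pow_eq hfa h.symm) (le_of_mul_pow_eq hfb h)

theorem exists_awayMk_not_dvd (hd : 0 < d) (hfp : Prime f) {u : Away 𝒜 f} (hu : u ≠ 0) :
    ∃ (n : ℕ) (a : MvPolynomial σ k) (ha : a ∈ 𝒜 (n • d)),
      ¬ f ∣ a ∧ Away.mk 𝒜 hf n a ha = u := by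
  suffices h : ∀ (n : ℕ) (a : MvPolynomial σ k) (ha : a ∈ 𝒜 (n • d)), a ≠ 0 →
      ∃ (n' : ℕ) (a' : MvPolynomial σ k) (ha' : a' ∈ 𝒜 (n' • d)),
        ¬ f ∣ a' ∧ Away.mk 𝒜 hf n' a' ha' = Away.mk 𝒜 hf n a ha by
    obtain ⟨n, a, ha, rfl⟩ := Away.mk_surjective 𝒜 hf u
    exact h n a ha fun ha0 => hu (by simp only [ha0]; exact Away.mk_zero hf)
  intro n
  induction n with
  | zero =>
    intro a ha ha0
    refine ⟨0, a, ha, fun hfa => hfp.not_isUnit (isUnit_of_dvd_unit hfa ?_), rfl⟩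
    exact IsHomogeneous.isUnit (by rwa [smul_eq_mul, zero_mul] at ha) ha0
  | succ n ih =>
    intro a ha ha0
    by_cases hfa : f ∣ a
    · obtain ⟨c, rfl⟩ := hfa
      obtain ⟨-, hc⟩ :=
        le_and_mem_of_mul_mem_homogeneousSubmodule hd ha ha0 (i := 1) (by rwa [one_smul])
      rw [Nat.add_sub_cancel] at hc
      obtain ⟨n', a', ha', hfa', h⟩ := ih c hc (right_ne_zero_of_mul ha0)
      refine ⟨n', a', ha', hfa', h.trans ((Away.mk_eq_mk_iff hf hfp.ne_zero hc ha).2 ?_)⟩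
      ring
    · exact ⟨n + 1, a, ha, hfa, rfl⟩

theorem awayMk_ne_zero (hfp : Prime f) {n : ℕ} {a : MvPolynomial σ k}
    {ha : a ∈ 𝒜 (n • d)} (hfa : ¬ f ∣ a) : Away.mk 𝒜 hf n a ha ≠ 0 := by
  intro h
  have ha0 : a = 0 := by
    simpa using (Away.mk_eq_mk_iff hf hfp.ne_zero ha (zero_mem _)).1
      (h.trans (Away.mk_zero hf (m := 0)).symm)
  exact hfa (ha0 ▸ dvd_zero f)

theorem isUnit_awayMk_iff (hd : 0 < d) (hfp : Prime f) {n : ℕ} {a : MvPolynomial σ k}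
    {ha : a ∈ 𝒜 (n • d)} (hfa : ¬ f ∣ a) : IsUnit (Away.mk 𝒜 hf n a ha) ↔ n = 0 := by
  have hone := (Away.mk_one (show f ∈ 𝒜 d from hf)).symm
  constructor
  · intro hu
    obtain ⟨w, hw⟩ := hu.exists_right_inv
    have hw0 : w ≠ 0 := by
      rintro rfl
      rw [mul_zero, hone] at hw
      exact awayMk_ne_zero hf hfp hfp.not_dvd_one hw.symm
    obtain ⟨r, b, hb, hfb, rfl⟩ := exists_awayMk_not_dvd hf hd hfp hw0
    rw [Away.mk_mul hf ha hb, hone] at hw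
    have := exponent_eq_of_awayMk_eq_awayMk hf hfp
      (fun h => (hfp.dvd_or_dvd h).elim hfa hfb) hfp.not_dvd_one hw
    omega
  · rintro rfl
    have ha0 : a.IsHomogeneous 0 := by rwa [smul_eq_mul, zero_mul] at ha
    obtain ⟨a', haa'⟩ := (ha0.isUnit fun h => hfa (h ▸ dvd_zero f)).exists_right_inv
    have ha' : a' ∈ 𝒜 (0 • d) := by
      rw [smul_eq_mul, zero_mul]
      exact isHomogeneous_zero_of_isUnit (IsUnit.of_mul_eq_one_right _ haa')
    refine IsUnit.of_mul_eq_one (Away.mk 𝒜 hf 0 a' ha') ?_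
    rw [Away.mk_mul hf ha ha', hone]
    exact (Away.mk_eq_mk_iff hf hfp.ne_zero _ _).2 (by rw [haa'])

theorem awayMk_dvd_awayMk_iff (hd : 0 < d) (hfp : Prime f) {m n : ℕ} {a b : MvPolynomial σ k}
    {ha : a ∈ 𝒜 (m • d)} {hb : b ∈ 𝒜 (n • d)} (hfa : ¬ f ∣ a) :
    Away.mk 𝒜 hf m a ha ∣ Away.mk 𝒜 hf n b hb ↔ a ∣ b := by
  constructor
  · rintro ⟨w, hw⟩
    obtain ⟨r, c, hc, rfl⟩ := Away.mk_surjective 𝒜 hf w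
    rw [Away.mk_mul hf ha hc] at hw
    have hbc := (Away.mk_eq_mk_iff hf hfp.ne_zero hb _).1 hw
    have hcop : IsRelPrime a (f ^ (m + r)) :=
      ((hfp.irreducible.isRelPrime_iff_not_dvd).2 hfa).symm.pow_right
    exact hcop.dvd_of_dvd_mul_right ⟨c * f ^ n, by rw [hbc]; ring⟩
  · rintro ⟨c, rfl⟩
    by_cases hac : a * c = 0
    · simp only [hac]
      rw [Away.mk_zero hf]
      exact dvd_zero _
    obtain ⟨hmn, hc⟩ := le_and_mem_of_mul_mem_homogeneousSubmodule hd hb hac ha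
    refine ⟨Away.mk 𝒜 hf (n - m) c hc, ?_⟩
    rw [Away.mk_mul hf ha hc]
    exact (Away.mk_eq_mk_iff hf hfp.ne_zero _ _).2 (by rw [Nat.add_sub_cancel' hmn])

theorem isUnit_or_isUnit_of_irreducible_awayMk (hd : 0 < d) (hfp : Prime f) {m i : ℕ}
    {a x y : MvPolynomial σ k} {ha : a ∈ 𝒜 (m • d)} (hfa : ¬ f ∣ a)
    (hu : Irreducible (Away.mk 𝒜 hf m a ha)) (hx : x ∈ 𝒜 (i • d)) (hxy : x * y = a) :
    IsUnit x ∨ IsUnit y := by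
  subst hxy
  have hxy0 : x * y ≠ 0 := fun h => hfa (h ▸ dvd_zero f)
  obtain ⟨him, hy⟩ := le_and_mem_of_mul_mem_homogeneousSubmodule hd ha hxy0 hx
  have hsplit : Away.mk 𝒜 hf m (x * y) ha =
      Away.mk 𝒜 hf i x hx * Away.mk 𝒜 hf (m - i) y hy := by
    rw [Away.mk_mul hf hx hy]
    exact (Away.mk_eq_mk_iff hf hfp.ne_zero _ _).2 (by rw [Nat.add_sub_cancel' him])
  refine (hu.isUnit_or_isUnit hsplit).imp (fun h => ?_) (fun h => ?_)
  · rw [isUnit_awayMk_iff hf hd hfp fun h => hfa (h.mul_right y)] at h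
    subst h
    exact IsHomogeneous.isUnit (by rwa [smul_eq_mul, zero_mul] at hx) (left_ne_zero_of_mul hxy0)
  · rw [isUnit_awayMk_iff hf hd hfp fun h => hfa (h.mul_left x)] at h
    rw [h, zero_smul] at hy
    exact hy.isUnit (right_ne_zero_of_mul hxy0)

theorem not_pow_succ_dvd_of_irreducible_awayMk (hd : 0 < d) (hfp : Prime f) {m : ℕ}
    {a p : MvPolynomial σ k} {ha : a ∈ 𝒜 (m • d)} (hfa : ¬ f ∣ a)
    (hu : Irreducible (Away.mk 𝒜 hf m a ha)) (hp : Prime p) : ¬ p ^ (d + 1) ∣ a := by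
  rintro ⟨c, rfl⟩
  have hp_hom : p.IsHomogeneous p.totalDegree := by
    refine IsHomogeneous.of_mul_left (q := p ^ d * c) (n := m * d) ?_ ?_
    · rwa [← mul_assoc, ← pow_succ']
    · rw [← mul_assoc, ← pow_succ']
      exact fun h => hfa (h ▸ dvd_zero f)
  rcases isUnit_or_isUnit_of_irreducible_awayMk hf hd hfp hfa hu (hp_hom.pow d)
      (y := p * c) (by ring) with h | h
  · exact hp.not_isUnit ((isUnit_pow_iff hd.ne').1 h)
  · exact hp.not_isUnit (isUnit_of_mul_isUnit_left h)

theorem irreducible_awayMk_one (hd : 0 < d) (hfp : Prime f) {a : MvPolynomial σ k}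
    {ha : a ∈ 𝒜 (1 • d)} (hfa : ¬ f ∣ a) : Irreducible (Away.mk 𝒜 hf 1 a ha) := by
  refine ⟨fun h => one_ne_zero ((isUnit_awayMk_iff hf hd hfp hfa).1 h), fun v w hvw => ?_⟩
  have hvw0 : v * w ≠ 0 := hvw ▸ awayMk_ne_zero hf hfp hfa
  obtain ⟨i, x, hx, hfx, rfl⟩ := exists_awayMk_not_dvd hf hd hfp (left_ne_zero_of_mul hvw0)
  obtain ⟨j, y, hy, hfy, rfl⟩ := exists_awayMk_not_dvd hf hd hfp (right_ne_zero_of_mul hvw0)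
  rw [Away.mk_mul hf hx hy] at hvw
  have hij := exponent_eq_of_awayMk_eq_awayMk hf hfp hfa
    (fun h => (hfp.dvd_or_dvd h).elim hfx hfy) hvw
  rcases Nat.eq_zero_or_pos i with rfl | hi
  · exact Or.inl ((isUnit_awayMk_iff hf hd hfp hfx).2 rfl)
  · exact Or.inr ((isUnit_awayMk_iff hf hd hfp hfy).2 (by omega))

theorem irreducibleDvdPowBound_away (hd : 0 < d) (hfp : Prime f) :
    IrreducibleDvdPowBound (Away 𝒜 f) d := by
  intro u v hu hv j huv
  obtain ⟨m, a, ha, hfa, rfl⟩ := exists_awayMk_not_dvd hf hd hfp hu.ne_zero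
  obtain ⟨n, b, hb, -, rfl⟩ := exists_awayMk_not_dvd hf hd hfp hv.ne_zero
  rw [Away.mk_pow hf hb, awayMk_dvd_awayMk_iff hf hd hfp hfa] at huv ⊢
  exact UniqueFactorizationMonoid.dvd_pow_of_dvd_pow_of_not_pow_succ_dvd
    (fun h => hfa (h ▸ dvd_zero f)) huv
    fun p hp => not_pow_succ_dvd_of_irreducible_awayMk hf hd hfp hfa hu hp

theorem le_of_irreducibleDvdPowBound_away [Nontrivial σ] (hd : 0 < d) (hfp : Prime f) {n : ℕ}
    (h : IrreducibleDvdPowBound (Away 𝒜 f) n) : d ≤ n := by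
  obtain ⟨i, hfi⟩ := exists_not_dvd_X hfp
  obtain ⟨j, hji⟩ := exists_ne i
  have hfu : ¬ f ∣ X i ^ d := fun h => hfi (hfp.dvd_of_dvd_pow h)
  have hfj : ¬ f ∣ X j ^ (d - 1) := not_dvd_of_isHomogeneous_of_lt hf
    (isHomogeneous_X_pow j (d - 1)) (pow_ne_zero _ (X_ne_zero j)) (by omega)
  have hu_hom : (X i ^ d : MvPolynomial σ k) ∈ 𝒜 (1 • d) := by
    rw [one_smul]; exact isHomogeneous_X_pow i d
  have hv_hom : (X i * X j ^ (d - 1) : MvPolynomial σ k) ∈ 𝒜 (1 • d) := by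
    rw [one_smul, mem_homogeneousSubmodule]
    convert (isHomogeneous_X k i).mul (isHomogeneous_X_pow j (d - 1)) using 1; omega
  have hu := irreducible_awayMk_one hf hd hfp (ha := hu_hom) hfu
  have hv := irreducible_awayMk_one hf hd hfp (ha := hv_hom)
    fun h => (hfp.dvd_or_dvd h).elim hfi hfj
  have hdvd_iff : ∀ n, Away.mk 𝒜 hf 1 _ hu_hom ∣ Away.mk 𝒜 hf 1 _ hv_hom ^ n ↔
      X i ^ d ∣ X i ^ n * X j ^ ((d - 1) * n) := fun n => by
    rw [Away.mk_pow hf hv_hom, awayMk_dvd_awayMk_iff hf hd hfp hfu, mul_pow, ← pow_mul]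
  exact X_pow_dvd_X_pow_mul_X_pow hji.symm
    ((hdvd_iff n).1 (h _ _ hu hv d ((hdvd_iff d).2 (dvd_mul_right _ _))))

end MvPolynomial

theorem degree_eq_of_complement_iso_general (k : Type) [Field k]
    (f g : MvPolynomial (Fin 3) k) (d e : ℕ) (hd : 0 < d) (he : 0 < e)
    (hf : f.IsHomogeneous d) (hg : g.IsHomogeneous e)
    (hfirr : Irreducible f) (hgirr : Irreducible g)
    (hiso : Nonempty (AwayRing k f ≃ₐ[k] AwayRing k g)) :
    d = e := by
  obtain ⟨φ⟩ := hiso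
  have hf_bound := irreducibleDvdPowBound_away hf hd hfirr.prime
  have hg_bound := irreducibleDvdPowBound_away hg he hgirr.prime
  exact le_antisymm
    (le_of_irreducibleDvdPowBound_away hf hd hfirr.prime (hg_bound.of_mulEquiv φ.symm.toMulEquiv))
    (le_of_irreducibleDvdPowBound_away hg he hgirr.prime (hf_bound.of_mulEquiv φ.toMulEquiv))

/-- Lemma 2.1: irreducible plane curves with isomorphic complements have the same degree. -/
theorem degree_eq_of_complement_iso (k : Type) [Field k] [IsAlgClosed k]
    (f g : MvPolynomial (Fin 3) k) (d e : ℕ) (hd : 0 < d) (he : 0 < e)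
    (hf : f.IsHomogeneous d) (hg : g.IsHomogeneous e)
    (hfirr : Irreducible f) (hgirr : Irreducible g)
    (hiso : Nonempty (AwayRing k f ≃ₐ[k] AwayRing k g)) :
    d = e :=
  degree_eq_of_complement_iso_general k f g d e hd he hf hg hfirr hgirr hiso
end

section
/- Let k be a field and let σ be a k-algebra automorphism of the polynomial ring k[x,y] such that σ(x) = a·x + b for some a ∈ k with a ≠ 0 and b ∈ k (i.e. σ is an affine de Jonquières map, preserving the fibration (x,y) ↦ x). Then there exist c ∈ k with c ≠ 0 and a polynomial p ∈ k[t] such that σ(y) = c·y + p(x). -/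
open MvPolynomial

section Aux

variable {k : Type} [Field k]

lemma aux_C_aeval {A : Type} [CommRing A] [Algebra k A]
    (φ : Polynomial (Polynomial k) →ₐ[k] A) (r : Polynomial k) :
    φ (Polynomial.C r) = Polynomial.aeval (φ (Polynomial.C Polynomial.X)) r := by
  induction r using Polynomial.induction_on with
  | C a =>
      have : (Polynomial.C (Polynomial.C a) : Polynomial (Polynomial k))
          = algebraMap k _ a := rfl
      rw [this, AlgHom.commutes]
      simp
  | add p q hp hq => simp [map_add, hp, hq]
  | monomial n a ih =>
      have : (Polynomial.C (Polynomial.C a * Polynomial.X ^ (n + 1)) :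
          Polynomial (Polynomial k))
          = Polynomial.C (Polynomial.C a * Polynomial.X ^ n) *
            Polynomial.C Polynomial.X := by
        rw [← Polynomial.C_mul]; ring_nf
      rw [this, map_mul, ih, map_mul]
      simp only [map_mul, map_pow, Polynomial.aeval_X]
      ring

lemma aux_aeval_CX (r : Polynomial k) :
    Polynomial.aeval (Polynomial.C Polynomial.X : Polynomial (Polynomial k)) r
      = Polynomial.C r := by
  have := aux_C_aeval (AlgHom.id k (Polynomial (Polynomial k))) r
  simpa using this.symm

lemma aux_comp (φ : Polynomial (Polynomial k) →ₐ[k] Polynomial (Polynomial k))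
    (h : φ (Polynomial.C Polynomial.X) = Polynomial.C Polynomial.X)
    (q : Polynomial (Polynomial k)) :
    φ q = q.comp (φ Polynomial.X) := by
  induction q using Polynomial.induction_on with
  | C r =>
      rw [aux_C_aeval φ r, h, aux_aeval_CX, Polynomial.C_comp]
  | add p q hp hq => simp [map_add, hp, hq, Polynomial.add_comp]
  | monomial n a ih =>
      simp only [map_mul, map_pow, Polynomial.mul_comp, Polynomial.pow_comp,
        Polynomial.X_comp, Polynomial.C_comp]
      rw [aux_C_aeval φ a, h, aux_aeval_CX]

/-- The base change equivalence `k[x,y] ≃ (k[x])[y]`. -/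
noncomputable def eAux (k : Type) [Field k] :
    MvPolynomial (Fin 2) k ≃ₐ[k] Polynomial (Polynomial k) :=
  (renameEquiv k (Equiv.swap 0 1)).trans <|
    (MvPolynomial.finSuccEquiv k 1).trans <|
      Polynomial.mapAlgEquiv ((renameEquiv k finOneEquiv).trans (pUnitAlgEquiv k))

lemma eAux_X0 : eAux k (X 0) = Polynomial.C Polynomial.X := by
  have h1 : ((1 : Fin 2)) = Fin.succ 0 := rfl
  rw [eAux]
  simp only [AlgEquiv.trans_apply, renameEquiv_apply, rename_X, Equiv.swap_apply_left,
    h1, finSuccEquiv_X_succ, Polynomial.coe_mapAlgEquiv, Polynomial.map_C]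
  congr 1
  simp

lemma eAux_X1 : eAux k (X 1) = Polynomial.X := by
  rw [eAux]
  simp only [AlgEquiv.trans_apply, renameEquiv_apply, rename_X, Equiv.swap_apply_right,
    finSuccEquiv_X_zero, Polynomial.coe_mapAlgEquiv, Polynomial.map_X]

lemma eAux_C (c : k) : eAux k (MvPolynomial.C c)
    = Polynomial.C (Polynomial.C c) := by
  have h1 : (MvPolynomial.C c : MvPolynomial (Fin 2) k) = algebraMap k _ c := rfl
  have h2 : (Polynomial.C (Polynomial.C c) : Polynomial (Polynomial k))
      = algebraMap k _ c := rfl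
  rw [h1, h2, AlgEquiv.commutes]

lemma eAux_symm_X0 : (eAux k).symm (Polynomial.C Polynomial.X) = X 0 := by
  rw [← eAux_X0 (k := k), AlgEquiv.symm_apply_apply]

lemma eAux_symm_X1 : (eAux k).symm Polynomial.X = X 1 := by
  rw [← eAux_X1 (k := k), AlgEquiv.symm_apply_apply]

lemma eAux_symm_C (c : k) : (eAux k).symm (Polynomial.C (Polynomial.C c))
    = MvPolynomial.C c := by
  rw [← eAux_C (k := k), AlgEquiv.symm_apply_apply]

lemma key1 (a b : k) (ha : a ≠ 0) :
    Polynomial.aeval (Polynomial.C a⁻¹ * Polynomial.X - Polynomial.C (a⁻¹ * b))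
      (Polynomial.C a * Polynomial.X + Polynomial.C b) = Polynomial.X := by
  simp only [map_add, map_mul, Polynomial.aeval_X, Polynomial.aeval_C,
    Polynomial.algebraMap_eq]
  have h1 : (Polynomial.C a : Polynomial k) * Polynomial.C a⁻¹ = 1 := by
    rw [← Polynomial.C_mul, mul_inv_cancel₀ ha, Polynomial.C_1]
  linear_combination (Polynomial.X - Polynomial.C b) * h1

lemma key2 (a b : k) (ha : a ≠ 0) :
    Polynomial.aeval (Polynomial.C a * Polynomial.X + Polynomial.C b)
      (Polynomial.C a⁻¹ * Polynomial.X - Polynomial.C (a⁻¹ * b)) = Polynomial.X := by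
  simp only [map_sub, map_mul, Polynomial.aeval_X, Polynomial.aeval_C,
    Polynomial.algebraMap_eq]
  have h1 : (Polynomial.C a⁻¹ : Polynomial k) * Polynomial.C a = 1 := by
    rw [← Polynomial.C_mul, inv_mul_cancel₀ ha, Polynomial.C_1]
  linear_combination Polynomial.X * h1

/-- The coefficient twist `x ↦ a⁻¹(x - b)`. -/
noncomputable def alphaAux (a b : k) (ha : a ≠ 0) : Polynomial k ≃ₐ[k] Polynomial k :=
  AlgEquiv.ofAlgHom
    (Polynomial.aeval (Polynomial.C a⁻¹ * Polynomial.X - Polynomial.C (a⁻¹ * b)))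
    (Polynomial.aeval (Polynomial.C a * Polynomial.X + Polynomial.C b))
    (by
      apply Polynomial.algHom_ext
      simp only [AlgHom.coe_comp, Function.comp_apply, Polynomial.aeval_X,
        AlgHom.coe_id, id_eq]
      exact key1 a b ha)
    (by
      apply Polynomial.algHom_ext
      simp only [AlgHom.coe_comp, Function.comp_apply, Polynomial.aeval_X,
        AlgHom.coe_id, id_eq]
      exact key2 a b ha)

lemma alphaAux_apply (a b : k) (ha : a ≠ 0) :
    alphaAux a b ha (Polynomial.C a * Polynomial.X + Polynomial.C b) = Polynomial.X :=
  key1 a b ha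

lemma alphaAux_C (a b : k) (ha : a ≠ 0) (c : k) :
    alphaAux a b ha (Polynomial.C c) = Polynomial.C c := by
  have h1 : (Polynomial.C c : Polynomial k) = algebraMap k _ c := rfl
  rw [h1, AlgEquiv.commutes]

lemma alphaAux_symm_C (a b : k) (ha : a ≠ 0) (c : k) :
    (alphaAux a b ha).symm (Polynomial.C c) = Polynomial.C c := by
  have h1 : (Polynomial.C c : Polynomial k) = algebraMap k _ c := rfl
  rw [h1, AlgEquiv.commutes]

lemma mapAlgEquiv_C (α : Polynomial k ≃ₐ[k] Polynomial k) (r : Polynomial k) :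
    Polynomial.mapAlgEquiv α (Polynomial.C r) = Polynomial.C (α r) := by
  simp

lemma mapAlgEquiv_X (α : Polynomial k ≃ₐ[k] Polynomial k) :
    Polynomial.mapAlgEquiv α (Polynomial.X : Polynomial (Polynomial k))
      = Polynomial.X := by
  simp

end Aux

/-- Lemma 3.5: an affine de Jonquières automorphism of `𝔸² = Spec k[x,y]`, i.e. a
`k`-algebra automorphism `σ` of `k[x,y]` preserving the fibration `(x,y) ↦ x` (so that
`σ(x) = a·x + b` with `a ≠ 0`), satisfies `σ(y) = c·y + p(x)` for some nonzero `c ∈ k`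
and some polynomial `p ∈ k[t]`. -/
theorem affine_deJonquieres_form (k : Type) [Field k]
    (σ : MvPolynomial (Fin 2) k ≃ₐ[k] MvPolynomial (Fin 2) k)
    (a b : k) (ha : a ≠ 0)
    (hx : σ (X 0) = C a * X 0 + C b) :
    ∃ c : k, c ≠ 0 ∧ ∃ p : Polynomial k,
      σ (X 1) = C c * X 1 + Polynomial.aeval (X 0 : MvPolynomial (Fin 2) k) p := by
  classical
  set e := eAux k with he
  set α := alphaAux a b ha with hα
  set β := Polynomial.mapAlgEquiv (R := k) α with hβ
  set τ : Polynomial (Polynomial k) ≃ₐ[k] Polynomial (Polynomial k) :=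
    ((e.symm.trans σ).trans e).trans β with hτ
  have hτ_def : ∀ q, τ q = β (e (σ (e.symm q))) := fun q => rfl
  have hτCX : τ (Polynomial.C Polynomial.X) = Polynomial.C Polynomial.X := by
    rw [hτ_def, he, eAux_symm_X0, hx]
    have h5 : eAux k (C a * X 0 + C b)
        = Polynomial.C (Polynomial.C a * Polynomial.X + Polynomial.C b) := by
      rw [map_add, map_mul, eAux_C, eAux_C, eAux_X0, ← Polynomial.C_mul,
        ← Polynomial.C_add]
    rw [h5, hβ, hα, mapAlgEquiv_C, alphaAux_apply]
  have hτsymmCX : τ.symm (Polynomial.C Polynomial.X) = Polynomial.C Polynomial.X := by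
    apply τ.injective; rw [AlgEquiv.apply_symm_apply, hτCX]
  set f := τ Polynomial.X with hf
  set g := τ.symm Polynomial.X with hg
  have hgf : g.comp f = Polynomial.X := by
    have h6 := aux_comp τ.toAlgHom hτCX g
    change τ g = g.comp (τ Polynomial.X) at h6
    rw [← h6, hg, AlgEquiv.apply_symm_apply]
  have hfg : f.comp g = Polynomial.X := by
    have h6 := aux_comp τ.symm.toAlgHom hτsymmCX f
    change τ.symm f = f.comp (τ.symm Polynomial.X) at h6
    rw [← h6, hf, AlgEquiv.symm_apply_apply]
  have hdeg : g.natDegree * f.natDegree = 1 := by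
    rw [← Polynomial.natDegree_comp, hgf, Polynomial.natDegree_X]
  have hfd : f.natDegree = 1 :=
    Nat.dvd_one.mp ⟨g.natDegree, by rw [mul_comm]; exact hdeg.symm⟩
  have hgd : g.natDegree = 1 :=
    Nat.dvd_one.mp ⟨f.natDegree, hdeg.symm⟩
  have hfeq : f = Polynomial.C (f.coeff 1) * Polynomial.X + Polynomial.C (f.coeff 0) :=
    Polynomial.eq_X_add_C_of_natDegree_le_one hfd.le
  have hgeq : g = Polynomial.C (g.coeff 1) * Polynomial.X + Polynomial.C (g.coeff 0) :=
    Polynomial.eq_X_add_C_of_natDegree_le_one hgd.le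
  have hunit : g.coeff 1 * f.coeff 1 = 1 := by
    have h := hgf
    rw [hgeq] at h
    simp only [Polynomial.add_comp, Polynomial.mul_comp, Polynomial.C_comp,
      Polynomial.X_comp] at h
    have h7 := congrArg (fun q => Polynomial.coeff q 1) h
    simpa [Polynomial.coeff_C_mul, Polynomial.coeff_C] using h7
  have hc1 : IsUnit (f.coeff 1) :=
    IsUnit.of_mul_eq_one _ (by rw [mul_comm]; exact hunit)
  obtain ⟨c, hcu, hcC⟩ := Polynomial.isUnit_iff.mp hc1
  refine ⟨c, hcu.ne_zero, α.symm (f.coeff 0), ?_⟩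
  have hβf : β.symm f = Polynomial.C (Polynomial.C c) * Polynomial.X
      + Polynomial.C (α.symm (f.coeff 0)) := by
    apply β.injective
    rw [AlgEquiv.apply_symm_apply, map_add, map_mul, hβ, mapAlgEquiv_C, mapAlgEquiv_C,
      mapAlgEquiv_X, AlgEquiv.apply_symm_apply, hα, alphaAux_C, hcC, ← hfeq]
  have hσ : e (σ (X 1)) = β.symm f := by
    apply β.injective
    rw [AlgEquiv.apply_symm_apply, hf, hτ_def, he, eAux_symm_X1]
  have h8 := hσ.trans hβf
  have hfinal : σ (X 1) = e.symm (Polynomial.C (Polynomial.C c) * Polynomial.X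
      + Polynomial.C (α.symm (f.coeff 0))) := by
    rw [← h8, AlgEquiv.symm_apply_apply]
  rw [hfinal, map_add, map_mul, he, eAux_symm_C, eAux_symm_X1]
  congr 1
  have h9 := aux_C_aeval (eAux k).symm.toAlgHom (α.symm (f.coeff 0))
  change (eAux k).symm (Polynomial.C (α.symm (f.coeff 0))) =
    Polynomial.aeval ((eAux k).symm (Polynomial.C Polynomial.X)) (α.symm (f.coeff 0)) at h9
  rw [h9, eAux_symm_X0]
end

section
/- Let k be an algebraically closed field and λ ∈ k with λ ≠ 0 and λ ≠ −1. Set Λ := xy + xz + yz, Γ_λ := x² − (1+λ)xy − λxz − (1+λ)yz, and Δ_λ := λz² − (λ+1)xy − xz − (λ+1)yz (the polynomial z² − (1+1/λ)xy − (1/λ)xz − (1+1/λ)yz cleared of denominators) in k[x,y,z]. Then there exists an invertible 3×3 matrix M over k whose substitution action sends Λ to a nonzero scalar multiple of Λ, sends Γ_λ to a nonzero scalar multiple of Δ_λ, and sends Δ_λ to a nonzero scalar multiple of Γ_λ (i.e. an automorphism of ℙ² preserving the conic Λ = 0 and exchanging the conics Γ_λ = 0 and Δ_λ = 0) if and only if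 λ = 1. -/
open MvPolynomial

/-- The conic `Λ : xy + xz + yz = 0`. -/
noncomputable def lamConic (k : Type) [Field k] : MvPolynomial (Fin 3) k :=
  X 0 * X 1 + X 0 * X 2 + X 1 * X 2

/-- The conic `Γ_λ : x² − (1+λ)xy − λxz − (1+λ)yz = 0`. -/
noncomputable def gammaConic (k : Type) [Field k] (l : k) : MvPolynomial (Fin 3) k :=
  X 0 ^ 2 - C (1 + l) * (X 0 * X 1) - C l * (X 0 * X 2) - C (1 + l) * (X 1 * X 2)

/-- The conic `Δ_λ : λz² − (λ+1)xy − xz − (λ+1)yz = 0`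
(the equation `z² − (1+1/λ)xy − (1/λ)xz − (1+1/λ)yz = 0` cleared of denominators). -/
noncomputable def deltaConic (k : Type) [Field k] (l : k) : MvPolynomial (Fin 3) k :=
  C l * X 2 ^ 2 - C (l + 1) * (X 0 * X 1) - X 0 * X 2 - C (l + 1) * (X 1 * X 2)

set_option maxHeartbeats 1000000 in
/-- The last assertion of Lemma 5.2: there is an automorphism of `ℙ²` preserving the
conic `Λ` and exchanging the conics `Γ_λ` and `Δ_λ` if and only if `λ = 1`. -/
theorem exists_exchange_automorphism_iff (k : Type) [Field k] [IsAlgClosed k]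
    (l : k) (hl0 : l ≠ 0) (hl1 : l ≠ -1) :
    (∃ M : Matrix (Fin 3) (Fin 3) k, IsUnit M.det ∧
      ∃ c₁ c₂ c₃ : kˣ,
        aeval (fun i => ∑ j, C (M i j) * X j) (lamConic k) = (c₁ : k) • lamConic k ∧
        aeval (fun i => ∑ j, C (M i j) * X j) (gammaConic k l) = (c₂ : k) • deltaConic k l ∧
        aeval (fun i => ∑ j, C (M i j) * X j) (deltaConic k l) = (c₃ : k) • gammaConic k l)
    ↔ l = 1 := by
  have hl1' : (1 : k) + l ≠ 0 := fun h => hl1 (by linear_combination h)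
  constructor
  · rintro ⟨M, -, c₁, c₂, c₃, h1, h2, h3⟩
    have L0 := congrArg (eval ![(1:k),0,0]) h1
    simp [lamConic, gammaConic, deltaConic, Fin.sum_univ_three, smul_eq_C_mul, Matrix.cons_val_zero, Matrix.cons_val_one, Matrix.head_cons, Matrix.cons_val_two, Matrix.tail_cons, Matrix.vecHead, Matrix.vecTail] at L0
    have L1 := congrArg (eval ![(0:k),1,0]) h1
    simp [lamConic, gammaConic, deltaConic, Fin.sum_univ_three, smul_eq_C_mul, Matrix.cons_val_zero, Matrix.cons_val_one, Matrix.head_cons, Matrix.cons_val_two, Matrix.tail_cons, Matrix.vecHead, Matrix.vecTail] at L1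
    have L2 := congrArg (eval ![(0:k),0,1]) h1
    simp [lamConic, gammaConic, deltaConic, Fin.sum_univ_three, smul_eq_C_mul, Matrix.cons_val_zero, Matrix.cons_val_one, Matrix.head_cons, Matrix.cons_val_two, Matrix.tail_cons, Matrix.vecHead, Matrix.vecTail] at L2
    have L01 := congrArg (eval ![(1:k),1,0]) h1
    simp [lamConic, gammaConic, deltaConic, Fin.sum_univ_three, smul_eq_C_mul, Matrix.cons_val_zero, Matrix.cons_val_one, Matrix.head_cons, Matrix.cons_val_two, Matrix.tail_cons, Matrix.vecHead, Matrix.vecTail] at L01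
    have L02 := congrArg (eval ![(1:k),0,1]) h1
    simp [lamConic, gammaConic, deltaConic, Fin.sum_univ_three, smul_eq_C_mul, Matrix.cons_val_zero, Matrix.cons_val_one, Matrix.head_cons, Matrix.cons_val_two, Matrix.tail_cons, Matrix.vecHead, Matrix.vecTail] at L02
    have L12 := congrArg (eval ![(0:k),1,1]) h1
    simp [lamConic, gammaConic, deltaConic, Fin.sum_univ_three, smul_eq_C_mul, Matrix.cons_val_zero, Matrix.cons_val_one, Matrix.head_cons, Matrix.cons_val_two, Matrix.tail_cons, Matrix.vecHead, Matrix.vecTail] at L12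
    have G0 := congrArg (eval ![(1:k),0,0]) h2
    simp [lamConic, gammaConic, deltaConic, Fin.sum_univ_three, smul_eq_C_mul, Matrix.cons_val_zero, Matrix.cons_val_one, Matrix.head_cons, Matrix.cons_val_two, Matrix.tail_cons, Matrix.vecHead, Matrix.vecTail] at G0
    have G1 := congrArg (eval ![(0:k),1,0]) h2
    simp [lamConic, gammaConic, deltaConic, Fin.sum_univ_three, smul_eq_C_mul, Matrix.cons_val_zero, Matrix.cons_val_one, Matrix.head_cons, Matrix.cons_val_two, Matrix.tail_cons, Matrix.vecHead, Matrix.vecTail] at G1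
    have G2 := congrArg (eval ![(0:k),0,1]) h2
    simp [lamConic, gammaConic, deltaConic, Fin.sum_univ_three, smul_eq_C_mul, Matrix.cons_val_zero, Matrix.cons_val_one, Matrix.head_cons, Matrix.cons_val_two, Matrix.tail_cons, Matrix.vecHead, Matrix.vecTail] at G2
    have G01 := congrArg (eval ![(1:k),1,0]) h2
    simp [lamConic, gammaConic, deltaConic, Fin.sum_univ_three, smul_eq_C_mul, Matrix.cons_val_zero, Matrix.cons_val_one, Matrix.head_cons, Matrix.cons_val_two, Matrix.tail_cons, Matrix.vecHead, Matrix.vecTail] at G01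
    have G02 := congrArg (eval ![(1:k),0,1]) h2
    simp [lamConic, gammaConic, deltaConic, Fin.sum_univ_three, smul_eq_C_mul, Matrix.cons_val_zero, Matrix.cons_val_one, Matrix.head_cons, Matrix.cons_val_two, Matrix.tail_cons, Matrix.vecHead, Matrix.vecTail] at G02
    have G12 := congrArg (eval ![(0:k),1,1]) h2
    simp [lamConic, gammaConic, deltaConic, Fin.sum_univ_three, smul_eq_C_mul, Matrix.cons_val_zero, Matrix.cons_val_one, Matrix.head_cons, Matrix.cons_val_two, Matrix.tail_cons, Matrix.vecHead, Matrix.vecTail] at G12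
    have D0 := congrArg (eval ![(1:k),0,0]) h3
    simp [lamConic, gammaConic, deltaConic, Fin.sum_univ_three, smul_eq_C_mul, Matrix.cons_val_zero, Matrix.cons_val_one, Matrix.head_cons, Matrix.cons_val_two, Matrix.tail_cons, Matrix.vecHead, Matrix.vecTail] at D0
    have D1 := congrArg (eval ![(0:k),1,0]) h3
    simp [lamConic, gammaConic, deltaConic, Fin.sum_univ_three, smul_eq_C_mul, Matrix.cons_val_zero, Matrix.cons_val_one, Matrix.head_cons, Matrix.cons_val_two, Matrix.tail_cons, Matrix.vecHead, Matrix.vecTail] at D1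
    have D2 := congrArg (eval ![(0:k),0,1]) h3
    simp [lamConic, gammaConic, deltaConic, Fin.sum_univ_three, smul_eq_C_mul, Matrix.cons_val_zero, Matrix.cons_val_one, Matrix.head_cons, Matrix.cons_val_two, Matrix.tail_cons, Matrix.vecHead, Matrix.vecTail] at D2
    have D01 := congrArg (eval ![(1:k),1,0]) h3
    simp [lamConic, gammaConic, deltaConic, Fin.sum_univ_three, smul_eq_C_mul, Matrix.cons_val_zero, Matrix.cons_val_one, Matrix.head_cons, Matrix.cons_val_two, Matrix.tail_cons, Matrix.vecHead, Matrix.vecTail] at D01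
    have D02 := congrArg (eval ![(1:k),0,1]) h3
    simp [lamConic, gammaConic, deltaConic, Fin.sum_univ_three, smul_eq_C_mul, Matrix.cons_val_zero, Matrix.cons_val_one, Matrix.head_cons, Matrix.cons_val_two, Matrix.tail_cons, Matrix.vecHead, Matrix.vecTail] at D02
    have D12 := congrArg (eval ![(0:k),1,1]) h3
    simp [lamConic, gammaConic, deltaConic, Fin.sum_univ_three, smul_eq_C_mul, Matrix.cons_val_zero, Matrix.cons_val_one, Matrix.head_cons, Matrix.cons_val_two, Matrix.tail_cons, Matrix.vecHead, Matrix.vecTail] at D12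
    -- coefficient equations of  x'·(x'+z') = c₂ l z (x+z) + a Λ,  a = (1+l)(c₁-c₂)
    have A1 : M 0 0 * (M 0 0 + M 2 0) = 0 := by
      linear_combination G0 + (1+l) * L0
    have A2 : M 0 1 * (M 0 1 + M 2 1) = 0 := by
      linear_combination G1 + (1+l) * L1
    have A3 : M 0 2 * (M 0 2 + M 2 2) = (c₂:k) * l := by
      linear_combination G2 + (1+l) * L2
    have A4 : M 0 0 * (M 0 1 + M 2 1) + M 0 1 * (M 0 0 + M 2 0)
        = (1+l) * ((c₁:k) - c₂) := by
      linear_combination G01 + (1+l) * L01 - G0 - (1+l) * L0 - G1 - (1+l) * L1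
    have A5 : M 0 0 * (M 0 2 + M 2 2) + M 0 2 * (M 0 0 + M 2 0)
        = (c₂:k) * l + (1+l) * ((c₁:k) - c₂) := by
      linear_combination G02 + (1+l) * L02 - G0 - (1+l) * L0 - G2 - (1+l) * L2
    have A6 : M 0 1 * (M 0 2 + M 2 2) + M 0 2 * (M 0 1 + M 2 1)
        = (1+l) * ((c₁:k) - c₂) := by
      linear_combination G12 + (1+l) * L12 - G1 - (1+l) * L1 - G2 - (1+l) * L2
    -- coefficient equations of  (l z')·(x'+z') = c₃ x (x+z) + b Λ,  b = (1+l)(c₁-c₃)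
    have B1 : l * (M 2 0 * (M 0 0 + M 2 0)) = (c₃:k) := by
      linear_combination D0 + (1+l) * L0
    have B2 : l * (M 2 1 * (M 0 1 + M 2 1)) = 0 := by
      linear_combination D1 + (1+l) * L1
    have B3 : l * (M 2 2 * (M 0 2 + M 2 2)) = 0 := by
      linear_combination D2 + (1+l) * L2
    have B4 : l * (M 2 0 * (M 0 1 + M 2 1) + M 2 1 * (M 0 0 + M 2 0))
        = (1+l) * ((c₁:k) - c₃) := by
      linear_combination D01 + (1+l) * L01 - D0 - (1+l) * L0 - D1 - (1+l) * L1
    have B5 : l * (M 2 0 * (M 0 2 + M 2 2) + M 2 2 * (M 0 0 + M 2 0))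
        = (c₃:k) + (1+l) * ((c₁:k) - c₃) := by
      linear_combination D02 + (1+l) * L02 - D0 - (1+l) * L0 - D2 - (1+l) * L2
    have B6 : l * (M 2 1 * (M 0 2 + M 2 2) + M 2 2 * (M 0 1 + M 2 1))
        = (1+l) * ((c₁:k) - c₃) := by
      linear_combination D12 + (1+l) * L12 - D1 - (1+l) * L1 - D2 - (1+l) * L2
    -- the discriminant of a product of two linear forms vanishes, so a³ = 0 and b³ = 0
    have ha3 : ((1+l) * ((c₁:k) - c₂))^3 = 0 := by
      linear_combination
        (-(4 * (M 0 1 * (M 0 1 + M 2 1)) * (M 0 2 * (M 0 2 + M 2 2))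
            - (M 0 1 * (M 0 2 + M 2 2) + M 0 2 * (M 0 1 + M 2 1))^2)) * A1
        + ((M 0 0 * (M 0 2 + M 2 2) + M 0 2 * (M 0 0 + M 2 0))^2) * A2
        + ((M 0 0 * (M 0 1 + M 2 1) + M 0 1 * (M 0 0 + M 2 0))^2) * A3
        + (-((M 0 0 * (M 0 2 + M 2 2) + M 0 2 * (M 0 0 + M 2 0))
              * (M 0 1 * (M 0 2 + M 2 2) + M 0 2 * (M 0 1 + M 2 1))
            - (c₂:k) * l * ((1+l) * ((c₁:k) - c₂)
              + (M 0 0 * (M 0 1 + M 2 1) + M 0 1 * (M 0 0 + M 2 0))))) * A4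
        + (-((1+l) * ((c₁:k) - c₂)
            * (M 0 1 * (M 0 2 + M 2 2) + M 0 2 * (M 0 1 + M 2 1)))) * A5
        + (-((1+l) * ((c₁:k) - c₂) * ((c₂:k) * l + (1+l) * ((c₁:k) - c₂)))) * A6
    have hb3 : ((1+l) * ((c₁:k) - c₃))^3 = 0 := by
      linear_combination
        (-(4 * (l * (M 2 1 * (M 0 1 + M 2 1))) * (l * (M 2 2 * (M 0 2 + M 2 2)))
            - (l * (M 2 1 * (M 0 2 + M 2 2) + M 2 2 * (M 0 1 + M 2 1)))^2)) * B1
        + (-(4 * (c₃:k) * (l * (M 2 2 * (M 0 2 + M 2 2)))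
            - (l * (M 2 0 * (M 0 2 + M 2 2) + M 2 2 * (M 0 0 + M 2 0)))^2)) * B2
        + ((l * (M 2 0 * (M 0 1 + M 2 1) + M 2 1 * (M 0 0 + M 2 0)))^2) * B3
        + (-((l * (M 2 0 * (M 0 2 + M 2 2) + M 2 2 * (M 0 0 + M 2 0)))
              * (l * (M 2 1 * (M 0 2 + M 2 2) + M 2 2 * (M 0 1 + M 2 1))))) * B4
        + (-((1+l) * ((c₁:k) - c₃)
            * (l * (M 2 1 * (M 0 2 + M 2 2) + M 2 2 * (M 0 1 + M 2 1))))) * B5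
        + (-((1+l) * ((c₁:k) - c₃) * ((c₃:k) + (1+l) * ((c₁:k) - c₃))
            - (c₃:k) * ((1+l) * ((c₁:k) - c₃)
              + l * (M 2 1 * (M 0 2 + M 2 2) + M 2 2 * (M 0 1 + M 2 1))))) * B6
    have ha : (1+l) * ((c₁:k) - c₂) = 0 :=
      pow_eq_zero_iff (by norm_num : (3:ℕ) ≠ 0) |>.mp ha3
    have hb : (1+l) * ((c₁:k) - c₃) = 0 :=
      pow_eq_zero_iff (by norm_num : (3:ℕ) ≠ 0) |>.mp hb3
    have hc2 : (c₂:k) = c₁ := by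
      rcases mul_eq_zero.mp ha with h | h
      · exact absurd h hl1'
      · linear_combination -h
    have hc3 : (c₃:k) = c₁ := by
      rcases mul_eq_zero.mp hb with h | h
      · exact absurd h hl1'
      · linear_combination -h
    -- nonvanishing facts
    have hA3ne : M 0 2 * (M 0 2 + M 2 2) ≠ 0 := by
      rw [A3]; exact mul_ne_zero c₂.ne_zero hl0
    have hn2 : (M 0 2 + M 2 2) ≠ 0 := right_ne_zero_of_mul hA3ne
    have hB1ne : l * (M 2 0 * (M 0 0 + M 2 0)) ≠ 0 := by
      rw [B1]; exact c₃.ne_zero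
    have hn0 : (M 0 0 + M 2 0) ≠ 0 :=
      right_ne_zero_of_mul (right_ne_zero_of_mul hB1ne)
    have hm00 : M 0 0 = 0 := by
      rcases mul_eq_zero.mp A1 with h | h
      · exact h
      · exact absurd h hn0
    have hm22 : M 2 2 = 0 := by
      rcases mul_eq_zero.mp B3 with h | h
      · exact absurd h hl0
      · rcases mul_eq_zero.mp h with h' | h'
        · exact h'
        · exact absurd h' hn2
    have k1 : M 0 2 * M 2 0 = (c₁:k) * l := by
      linear_combination A5 - (2 * M 0 2 + M 2 2) * hm00 - hc2
    have k2 : l * (M 2 0 * M 0 2) = (c₁:k) := by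
      linear_combination B5 - l * (M 0 0 + 2 * M 2 0) * hm22 - l * hc3
    have hfin : (c₁:k) * (l * l - 1) = 0 := by
      linear_combination k2 - l * k1
    have hll : l * l - 1 = 0 := by
      rcases mul_eq_zero.mp hfin with h | h
      · exact absurd h c₁.ne_zero
      · exact h
    rcases mul_eq_zero.mp (show (l - 1) * (l + 1) = 0 by linear_combination hll) with h | h
    · linear_combination h
    · exact absurd (by linear_combination h) hl1'
  · rintro rfl
    refine ⟨!![(0:k),0,1; 0,1,0; 1,0,0], ?_, 1, 1, 1, ?_, ?_, ?_⟩
    · have hd : (!![(0:k),0,1; 0,1,0; 1,0,0]).det = -1 := by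
        simp [Matrix.det_fin_three, Matrix.cons_val_zero, Matrix.cons_val_one, Matrix.head_cons,
          Matrix.cons_val_two, Matrix.tail_cons, Matrix.vecHead, Matrix.vecTail]
      rw [hd]
      exact isUnit_one.neg
    · simp [lamConic, Fin.sum_univ_three, Matrix.cons_val_zero, Matrix.cons_val_one,
        Matrix.head_cons, Matrix.cons_val_two, Matrix.tail_cons, Matrix.vecHead, Matrix.vecTail]
      ring
    · simp [gammaConic, deltaConic, Fin.sum_univ_three, Matrix.cons_val_zero, Matrix.cons_val_one,
        Matrix.head_cons, Matrix.cons_val_two, Matrix.tail_cons, Matrix.vecHead, Matrix.vecTail]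
      ring
    · simp [gammaConic, deltaConic, Fin.sum_univ_three, Matrix.cons_val_zero, Matrix.cons_val_one,
        Matrix.head_cons, Matrix.cons_val_two, Matrix.tail_cons, Matrix.vecHead, Matrix.vecTail]
      ring
end

section
/- Let k be an algebraically closed field and λ ∈ k with λ ≠ 0 and λ ≠ −1. Set Λ := xy + xz + yz, Γ_λ := x² − (1+λ)xy − λxz − (1+λ)yz, and Δ_λ := λz² − (λ+1)xy − xz − (λ+1)yz in k[x,y,z]. Then for every (x,y,z) ∈ k³ ∖ {(0,0,0)}: (1) Λ and Γ_λ vanish simultaneously at (x,y,z) if and only if (x,y,z) is a scalar multiple of (0,1,0) or of (0,0,1); (2) Λ and Δ_λ vanish simultaneously at (x,y,z) if and only if (x,y,z) is a scalar multiple of (0,1,0) or of (1,0,0); (3) Γ_λ and Δ_λ vanish simultaneously at (x,y,z) if and only if (x,y,z) is a scalar multiple of (0,1,0) or of (λ,0,1). -/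
/-- The pairwise intersection points of the conics `Λ = xy + xz + yz`,
`Γ_λ = x² − (1+λ)xy − λxz − (1+λ)yz` and `Δ_λ = λz² − (λ+1)xy − xz − (λ+1)yz` of
Lemma 5.2: apart from the common point `[0:1:0]`, the pairs `(Λ,Γ_λ)`, `(Λ,Δ_λ)`,
`(Γ_λ,Δ_λ)` meet only in `[0:0:1]`, `[1:0:0]` and `[λ:0:1]` respectively. -/
theorem conic_intersections (k : Type) [Field k] [IsAlgClosed k]
    (l : k) (hl0 : l ≠ 0) (hl1 : l ≠ -1)
    (x y z : k) (hxyz : (x, y, z) ≠ (0, 0, 0)) :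
    ((x * y + x * z + y * z = 0 ∧
        x ^ 2 - (1 + l) * (x * y) - l * (x * z) - (1 + l) * (y * z) = 0) ↔
      ((∃ t : k, (x, y, z) = (0, t, 0)) ∨ (∃ t : k, (x, y, z) = (0, 0, t)))) ∧
    ((x * y + x * z + y * z = 0 ∧
        l * z ^ 2 - (l + 1) * (x * y) - x * z - (l + 1) * (y * z) = 0) ↔
      ((∃ t : k, (x, y, z) = (0, t, 0)) ∨ (∃ t : k, (x, y, z) = (t, 0, 0)))) ∧
    ((x ^ 2 - (1 + l) * (x * y) - l * (x * z) - (1 + l) * (y * z) = 0 ∧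
        l * z ^ 2 - (l + 1) * (x * y) - x * z - (l + 1) * (y * z) = 0) ↔
      ((∃ t : k, (x, y, z) = (0, t, 0)) ∨ (∃ t : k, (x, y, z) = (t * l, 0, t)))) := by
  have hl1' : (1 : k) + l ≠ 0 := fun h => hl1 (by linear_combination h)
  refine ⟨⟨?_, ?_⟩, ⟨?_, ?_⟩, ⟨?_, ?_⟩⟩
  · rintro ⟨h1, h2⟩
    have hx : x * (x + z) = 0 := by linear_combination h2 + (1 + l) * h1
    rcases mul_eq_zero.1 hx with hx0 | hxz
    · subst hx0
      have hyz : y * z = 0 := by linear_combination h1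
      rcases mul_eq_zero.1 hyz with h | h
      · exact Or.inr ⟨z, by simp [h]⟩
      · exact Or.inl ⟨y, by simp [h]⟩
    · have hx : x = -z := by linear_combination hxz
      subst hx
      have hz2 : z ^ 2 = 0 := by linear_combination -h1
      have hz : z = 0 := by
        have := pow_eq_zero_iff (n := 2) (by norm_num) |>.1 hz2
        exact this
      subst hz
      exact Or.inl ⟨y, by simp⟩
  · rintro (⟨t, ht⟩ | ⟨t, ht⟩) <;>
      (simp only [Prod.mk.injEq] at ht; obtain ⟨rfl, rfl, rfl⟩ := ht) <;>
      constructor <;> ring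
  · rintro ⟨h1, h2⟩
    have hz : l * (z * (z + x)) = 0 := by linear_combination h2 + (l + 1) * h1
    have hz' : z * (z + x) = 0 := by
      rcases mul_eq_zero.1 hz with h | h
      · exact absurd h hl0
      · exact h
    rcases mul_eq_zero.1 hz' with hz0 | hzx
    · subst hz0
      have hxy : x * y = 0 := by linear_combination h1
      rcases mul_eq_zero.1 hxy with h | h
      · exact Or.inl ⟨y, by simp [h]⟩
      · exact Or.inr ⟨x, by simp [h]⟩
    · have hx : x = -z := by linear_combination hzx
      subst hx
      have hz2 : z ^ 2 = 0 := by linear_combination -h1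
      have hz : z = 0 := pow_eq_zero_iff (n := 2) (by norm_num) |>.1 hz2
      subst hz
      exact Or.inl ⟨y, by simp⟩
  · rintro (⟨t, ht⟩ | ⟨t, ht⟩) <;>
      (simp only [Prod.mk.injEq] at ht; obtain ⟨rfl, rfl, rfl⟩ := ht) <;>
      constructor <;> ring
  · rintro ⟨h1, h2⟩
    have hfac : (x - l * z) * (x + z) = 0 := by linear_combination h1 - h2
    rcases mul_eq_zero.1 hfac with hxz | hxz
    · have hx : x = l * z := by linear_combination hxz
      subst hx
      have hyz : (1 + l) * ((1 + l) * (y * z)) = 0 := by linear_combination -h1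
      have hyz' : y * z = 0 := by
        rcases mul_eq_zero.1 hyz with h | h
        · exact absurd h hl1'
        · rcases mul_eq_zero.1 h with h | h
          · exact absurd h hl1'
          · exact h
      rcases mul_eq_zero.1 hyz' with h | h
      · exact Or.inr ⟨z, by simp [h, mul_comm]⟩
      · subst h
        exact Or.inl ⟨y, by simp⟩
    · have hx : x = -z := by linear_combination hxz
      subst hx
      have hz2 : (1 + l) * z ^ 2 = 0 := by linear_combination h1
      have hz : z = 0 := by
        rcases mul_eq_zero.1 hz2 with h | h
        · exact absurd h hl1'
        · exact pow_eq_zero_iff (n := 2) (by norm_num) |>.1 h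
      subst hz
      exact Or.inl ⟨y, by simp⟩
  · rintro (⟨t, ht⟩ | ⟨t, ht⟩) <;>
      (simp only [Prod.mk.injEq] at ht; obtain ⟨rfl, rfl, rfl⟩ := ht) <;>
      constructor <;> ring
end

section
/- Let d ≥ 3 be an integer, n ≥ 1, and let m₁, …, m_n be integers with mᵢ ≥ 1 for all i. If Σᵢ mᵢ(mᵢ − 1) = d² − 3d + 2 and Σᵢ mᵢ² = d² + 1, then there exists an index i with d < 3·mᵢ; in particular if the sequence is non-increasing then d < 3·m₁. -/
/-- The arithmetic core of Lemma 4.4: if integers `m₁, …, m_n ≥ 1` satisfy the genus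
identity `Σ mᵢ(mᵢ−1) = d² − 3d + 2` and the self-intersection identity `Σ mᵢ² = d² + 1`
for some integer `d ≥ 3`, then `d < 3mᵢ` for some `i`; in particular, if the sequence is
non-increasing then `d < 3m₁`. -/
theorem degree_lt_three_mul_max_multiplicity (d : ℤ) (hd : 3 ≤ d)
    (n : ℕ) (hn : 0 < n) (m : Fin n → ℤ) (hm : ∀ i, 1 ≤ m i)
    (hgenus : ∑ i, m i * (m i - 1) = d ^ 2 - 3 * d + 2)
    (hsq : ∑ i, (m i) ^ 2 = d ^ 2 + 1) :
    (∃ i, d < 3 * m i) ∧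
      ((∀ i j : Fin n, i ≤ j → m j ≤ m i) → d < 3 * m ⟨0, hn⟩) := by
  have hsum : ∑ i, m i = 3 * d - 1 := by
    have : ∑ i, m i = ∑ i, ((m i) ^ 2 - m i * (m i - 1)) := by
      apply Finset.sum_congr rfl; intro i _; ring
    rw [this, Finset.sum_sub_distrib, hsq, hgenus]; ring
  have hkey : ∑ i, (3 * m i - d) * m i = d + 3 := by
    have : ∑ i, (3 * m i - d) * m i = 3 * ∑ i, (m i) ^ 2 - d * ∑ i, m i := by
      rw [Finset.mul_sum, Finset.mul_sum, ← Finset.sum_sub_distrib]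
      apply Finset.sum_congr rfl; intro i _; ring
    rw [this, hsq, hsum]; ring
  have hex : ∃ i, d < 3 * m i := by
    by_contra h
    push_neg at h
    have hle : ∑ i, (3 * m i - d) * m i ≤ 0 := by
      apply Finset.sum_nonpos
      intro i _
      exact mul_nonpos_of_nonpos_of_nonneg (by linarith [h i]) (by linarith [hm i])
    linarith
  refine ⟨hex, fun hmono => ?_⟩
  obtain ⟨i, hi⟩ := hex
  have := hmono ⟨0, hn⟩ i (Fin.mk_le_of_le_val (Nat.zero_le _))
  linarith
end

section
/- Let d, m, k be integers with d ≥ 4, m ≥ 2 and k ≥ 1. If d² − k·m² − m + 2 = 0 and d² − 3d + 2 − k·m·(m−1) = 0, then (d, m, k) = (8, 3, 7) or (d, m, k) = (16, 6, 7). -/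
/-- The Diophantine claim of Claim (4) in the proof of Proposition 4.13: the system
`d² − km² − m + 2 = 0`, `d² − 3d + 2 − km(m−1) = 0` with `d ≥ 4`, `m ≥ 2`, `k ≥ 1` has
exactly the solutions `(d,m,k) = (8,3,7)` and `(16,6,7)`. -/
theorem constant_multiplicity_sequence_solutions (d m k : ℤ)
    (hd : 4 ≤ d) (hm : 2 ≤ m) (hk : 1 ≤ k)
    (h1 : d ^ 2 - k * m ^ 2 - m + 2 = 0)
    (h2 : d ^ 2 - 3 * d + 2 - k * m * (m - 1) = 0) :
    (d = 8 ∧ m = 3 ∧ k = 7) ∨ (d = 16 ∧ m = 6 ∧ k = 7) := by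
  -- Subtracting the equations: 3d = m(k+1)
  have h3 : 3 * d = m * (k + 1) := by linarith [h1, h2, mul_comm k m]
  -- Key equation: m²(k² - 7k + 1) = 9(m - 2)
  have key : m ^ 2 * (k ^ 2 - 7 * k + 1) = 9 * (m - 2) := by
    have h9 : 9 * d ^ 2 = m ^ 2 * (k + 1) ^ 2 := by nlinarith [h3]
    nlinarith [h1, h9]
  set A : ℤ := k ^ 2 - 7 * k + 1 with hA
  -- A is odd, hence nonzero
  have hodd : Odd A := by
    rcases Int.even_or_odd k with ⟨t, ht⟩ | ⟨t, ht⟩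
    · exact ⟨2 * t ^ 2 - 7 * t, by rw [hA, ht]; ring⟩
    · exact ⟨2 * t ^ 2 - 5 * t - 3, by rw [hA, ht]; ring⟩
  obtain ⟨t, ht⟩ := hodd
  have hA0 : A ≠ 0 := by omega
  -- A ≥ 1 since m²A = 9(m-2) ≥ 0 and m² > 0
  have hm2 : (0:ℤ) < m ^ 2 := by positivity
  have hA1 : 1 ≤ A := by
    rcases lt_or_ge A 0 with h | h
    · nlinarith [key]
    · omega
  -- hence m² ≤ 9(m-2), so 3 ≤ m ≤ 6
  have hmle : m ^ 2 ≤ 9 * (m - 2) := by nlinarith [key]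
  have hm3 : 3 ≤ m := by nlinarith
  have hm6 : m ≤ 6 := by nlinarith
  have hk7 : ∀ h : k ^ 2 = 7 * k, k = 7 := by
    intro h
    have : k * (k - 7) = 0 := by ring_nf; linarith
    rcases mul_eq_zero.mp this with h' | h' <;> omega
  interval_cases m
  · -- m = 3 : 9A = 9 → A = 1 → k = 7 → d = 8
    have : A = 1 := by omega
    have hk' : k = 7 := hk7 (by omega)
    subst hk'
    left; refine ⟨by omega, rfl, rfl⟩
  · exfalso; omega  -- m = 4 : 16A = 18
  · exfalso; omega  -- m = 5 : 25A = 27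
  · -- m = 6 : 36A = 36 → A = 1 → k = 7 → d = 16
    have : A = 1 := by omega
    have hk' : k = 7 := hk7 (by omega)
    subst hk'
    right; refine ⟨by omega, rfl, rfl⟩
end

section
/- Let d, m, l be integers with d ≥ 1, m ≥ 3 and l ≥ 1. If d² − m² − l·(m−1)² + 1 = 0 and d² − 3d + 2 − m·(m−1) − l·(m−1)·(m−2) = 0, then (d, m, l) = (6, 3, 7). -/
/-- The Diophantine claim of Claim (A.1) in the proof of Proposition 4.19: the system
`d² − m² − l(m−1)² + 1 = 0`, `d² − 3d + 2 − m(m−1) − l(m−1)(m−2) = 0` with `d ≥ 1`,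
`m ≥ 3`, `l ≥ 1` forces `(d,m,l) = (6,3,7)` (the sextic with multiplicity sequence
`(3, 2_(7))`). -/
theorem multiplicity_sequence_m_mminus1_solutions (d m l : ℤ)
    (hd : 1 ≤ d) (hm : 3 ≤ m) (hl : 1 ≤ l)
    (h1 : d ^ 2 - m ^ 2 - l * (m - 1) ^ 2 + 1 = 0)
    (h2 : d ^ 2 - 3 * d + 2 - m * (m - 1) - l * (m - 1) * (m - 2) = 0) :
    d = 6 ∧ m = 3 ∧ l = 7 := by
  have h3 : l * (m - 1) = 3 * d - m - 1 := by linear_combination h2 - h1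
  have h4 : d * (d - 3 * m + 3) = 0 := by linear_combination h1 + (m - 1) * h3
  have hd0 : d ≠ 0 := by omega
  have hdm : d = 3 * m - 3 := by
    rcases mul_eq_zero.mp h4 with h | h
    · omega
    · omega
  have h5 : (8 - l) * (m - 1) = 2 := by linear_combination -h3 - 3 * hdm
  have hdvd : m - 1 ∣ 2 := ⟨8 - l, by linarith [h5, mul_comm (8 - l) (m - 1)]⟩
  have hle : m - 1 ≤ 2 := Int.le_of_dvd (by norm_num) hdvd
  have hm3 : m = 3 := by omega
  subst hm3
  have hl7 : l = 7 := by omega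
  omega
end

section
/- There are no integers d ≥ 1, m ≥ 3 and l ≥ 1 satisfying both d² − m² − l·(m−1)² − m + 2 = 0 and d² − 3d + 2 − m·(m−1) − l·(m−1)·(m−2) = 0. -/
/-- The Diophantine claim of Claim (A.2) (case `δ = −1`, `k = 1`) in the proof of
Proposition 4.19: there are no integers `d ≥ 1`, `m ≥ 3`, `l ≥ 1` with
`d² − m² − l(m−1)² − m + 2 = 0` and `d² − 3d + 2 − m(m−1) − l(m−1)(m−2) = 0`. -/theorem no_solutions_claim_A2 :
    ¬ ∃ d m l : ℤ, 1 ≤ d ∧ 3 ≤ m ∧ 1 ≤ l ∧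
      d ^ 2 - m ^ 2 - l * (m - 1) ^ 2 - m + 2 = 0 ∧
      d ^ 2 - 3 * d + 2 - m * (m - 1) - l * (m - 1) * (m - 2) = 0 := by
  rintro ⟨d, m, l, hd, hm, hl, h1, h2⟩
  set t : ℤ := m - 1 with ht
  have ht2 : 2 ≤ t := by omega
  have hld : 3 * d = t * (l + 2) + 2 := by linear_combination h1 - h2
  have hd2 : d ^ 2 = t * (3 * d - t + 1) := by linear_combination h1 - t * hld
  have htdvd : t ∣ d ^ 2 := ⟨3 * d - t + 1, hd2⟩
  have hprime : ∀ p : ℤ, Prime p → p ∣ t → p ∣ 2 := by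
    intro p hp hpt
    have hpd : p ∣ d := hp.dvd_of_dvd_pow (hpt.trans htdvd)
    have h' : p ∣ 3 * d - t * (l + 2) :=
      dvd_sub (Dvd.dvd.mul_left hpd 3) (Dvd.dvd.mul_right hpt _)
    rwa [hld, add_sub_cancel_left] at h'
  set T : ℕ := t.toNat with hT
  have htT : (T : ℤ) = t := Int.toNat_of_nonneg (by omega)
  have hTprime : ∀ {q : ℕ}, q.Prime → q ∣ T → q = 2 := by
    intro q hq hqT
    have h2' : (q : ℤ) ∣ 2 := hprime q (Nat.prime_iff_prime_int.mp hq)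
      (htT ▸ Int.natCast_dvd_natCast.mpr hqT)
    have hq2 : q ∣ 2 := by exact_mod_cast h2'
    exact (Nat.prime_dvd_prime_iff_eq hq Nat.prime_two).mp hq2
  have hT0 : T ≠ 0 := by omega
  obtain hpow := Nat.eq_prime_pow_of_unique_prime_dvd hT0 hTprime
  set a : ℕ := T.primeFactorsList.length with ha
  have hT2 : 2 ≤ T := by omega
  have ha1 : 1 ≤ a := by
    by_contra h
    interval_cases a <;> omega
  -- 2 ∣ t, hence 2 ∣ d
  have h2t : (2:ℤ) ∣ t := by
    have : (2:ℕ) ∣ T := hpow ▸ dvd_pow_self 2 (by omega)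
    exact_mod_cast htT ▸ Int.natCast_dvd_natCast.mpr this
  have h2d : (2:ℤ) ∣ d := Int.prime_two.dvd_of_dvd_pow (h2t.trans htdvd)
  obtain ⟨e, he⟩ := h2d
  rcases Nat.lt_or_ge a 3 with h3 | h3
  · have htv : t = 2 ∨ t = 4 := by interval_cases a <;> omega
    rcases htv with h | h
    · -- t = 2 : d² = 2(3d-1), 4e² = 12e - 2
      have : 4 * e ^ 2 = 12 * e - 2 := by
        have := hd2; rw [h, he] at this; nlinarith [this]
      obtain ⟨s, hs⟩ : ∃ s, s = e ^ 2 := ⟨e ^ 2, rfl⟩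
      rw [← hs] at this; omega
    · -- t = 4 : d² = 4(3d-3), 4e² = 24e - 12, e² = 6e - 3, 3 ∣ e
      have he2 : e ^ 2 = 6 * e - 3 := by
        have h' := hd2; rw [h, he] at h'; nlinarith [h']
      have h3e : (3:ℤ) ∣ e := by
        refine Int.prime_three.dvd_of_dvd_pow (n := 2) ⟨2 * e - 1, by linarith⟩
      obtain ⟨f, hf⟩ := h3e
      have : 3 * f ^ 2 = 6 * f - 1 := by nlinarith [he2, hf]
      obtain ⟨s, hs⟩ : ∃ s, s = f ^ 2 := ⟨f ^ 2, rfl⟩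
      rw [← hs] at this; omega
  · have h8t : (8:ℤ) ∣ t := by
      have h8 : (2^3 : ℕ) ∣ T := hpow ▸ pow_dvd_pow 2 h3
      have := Int.natCast_dvd_natCast.mpr h8
      rw [htT] at this; exact_mod_cast this
    have h8d2 : (8:ℤ) ∣ d ^ 2 := h8t.trans htdvd
    have h4t : (4:ℤ) ∣ t := dvd_trans ⟨2, by norm_num⟩ h8t
    have h4 : (4:ℤ) ∣ 3 * d - 2 := by
      have heq : 3 * d - 2 = t * (l + 2) := by linarith
      rw [heq]; exact h4t.mul_right _
    have hdm : d % 4 = 2 := by omega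
    obtain ⟨f, hf⟩ : ∃ f, d = 4 * f + 2 := ⟨d / 4, by omega⟩
    have h16 : (8:ℤ) ∣ 16 * f ^ 2 + 16 * f + 4 := by
      rw [hf] at h8d2; convert h8d2 using 1; ring
    obtain ⟨s, hs⟩ : ∃ s, s = f ^ 2 := ⟨f ^ 2, rfl⟩
    rw [← hs] at h16; omega
end

section
/- Let d, m, k be integers with d ≥ 1, m ≥ 3 and k ≥ 1. If d² − k·m² − (m−1)² − m + 2 = 0 and d² − 3d + 2 − k·m·(m−1) − (m−1)·(m−2) = 0, then (d, m, k) = (13, 5, 6). -/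
/-- The Diophantine claim of Claim (B.i.2) (case `δ = 0`, `l = 1`) in the proof of
Proposition 4.19: the system `d² − km² − (m−1)² − m + 2 = 0`,
`d² − 3d + 2 − km(m−1) − (m−1)(m−2) = 0` with `d ≥ 1`, `m ≥ 3`, `k ≥ 1` forces
`(d,m,k) = (13,5,6)` (degree-13 curves with multiplicity sequence `(5_(6), 4)`). -/
theorem multiplicity_sequence_claim_Bi2_solutions (d m k : ℤ)
    (hd : 1 ≤ d) (hm : 3 ≤ m) (hk : 1 ≤ k)
    (h1 : d ^ 2 - k * m ^ 2 - (m - 1) ^ 2 - m + 2 = 0)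
    (h2 : d ^ 2 - 3 * d + 2 - k * m * (m - 1) - (m - 1) * (m - 2) = 0) :
    d = 13 ∧ m = 5 ∧ k = 6 := by
  -- Subtracting the equations: 3d = km + 2m − 1.
  have e1 : 3 * d = k * m + 2 * m - 1 := by linear_combination h1 - h2
  -- Substituting: d² − 3dm + m² + 1 = 0.
  have e2 : d ^ 2 - 3 * d * m + m ^ 2 + 1 = 0 := by linear_combination h1 - m * e1
  -- m divides 3d + 1 and 9(d² + 1), hence m ∣ 10.
  have h10 : m ∣ 10 := by
    have hA : m ∣ 3 * d + 1 := ⟨k + 2, by linarith [e1]⟩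
    have hB : m ∣ 9 * d ^ 2 + 9 := ⟨27 * d - 9 * m, by linear_combination 9 * e2⟩
    have : m ∣ 10 := by
      have := Dvd.dvd.sub hB (Dvd.dvd.mul_left hA (3 * d - 1))
      have heq : 9 * d ^ 2 + 9 - (3 * d - 1) * (3 * d + 1) = 10 := by ring
      rwa [heq] at this
    exact this
  have hmle : m ≤ 10 := Int.le_of_dvd (by norm_num) h10
  interval_cases m
  -- m = 3, 4, 6, 7, 8, 9: contradict m ∣ 10
  · omega
  · omega
  -- m = 5: d² − 15d + 26 = 0, i.e. (d − 2)(d − 13) = 0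
  · have : (d - 2) * (d - 13) = 0 := by linear_combination e2
    rcases mul_eq_zero.mp this with h | h
    · omega  -- d = 2 makes 3d = 5k + 9 impossible
    · refine ⟨by omega, rfl, by omega⟩
  · omega
  · omega
  · omega
  · omega
  -- m = 10: d² − 30d + 101 = 0 has no integer root
  · exfalso
    have hA : (d - 3) * (d - 4) >= 0 := by
      rcases le_or_gt d 3 with h | h
      · nlinarith
      · nlinarith
    have hB : (d - 26) * (d - 27) >= 0 := by
      rcases le_or_gt d 26 with h | h
      · nlinarith
      · nlinarith
    nlinarith [e2, hA, hB]
end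

section
/- There are no integers d and n ≥ 0 together with even integers m₁, …, m_n, each mᵢ ≥ 2, satisfying both Σᵢ mᵢ² = d² and Σᵢ mᵢ = 3d − 2. -/
/-- The parity claim of Claim (2) (case `δ = 0`) in the proof of Proposition 4.26: there
are no integer `d` and even integers `m₁, …, m_n ≥ 2` with `Σ mᵢ² = d²` and
`Σ mᵢ = 3d − 2`. -/
theorem no_solutions_all_even :
    ¬ ∃ (d : ℤ) (n : ℕ) (m : Fin n → ℤ),
      (∀ i, 2 ≤ m i ∧ Even (m i)) ∧
      (∑ i, (m i) ^ 2 = d ^ 2) ∧ (∑ i, m i = 3 * d - 2) := by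
  rintro ⟨d, n, m, hm, hsq, hsum⟩
  -- 8 divides each mᵢ * (mᵢ + 2)
  have h8 : (8 : ℤ) ∣ ∑ i, m i * (m i + 2) := by
    refine Finset.dvd_sum fun i _ => ?_
    obtain ⟨k, hk⟩ := (hm i).2
    obtain ⟨l, hl⟩ := Int.even_mul_succ_self k
    have : m i * (m i + 2) = 8 * (l) := by
      rw [hk]; ring_nf; ring_nf at hl; nlinarith [hl]
    exact ⟨l, this⟩
  have hval : ∑ i, m i * (m i + 2) = d ^ 2 + 6 * d - 4 := by
    have : ∑ i, m i * (m i + 2) = (∑ i, (m i) ^ 2) + 2 * ∑ i, m i := by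
      rw [Finset.mul_sum, ← Finset.sum_add_distrib]
      congr 1; funext i; ring
    rw [this, hsq, hsum]; ring
  -- d is even
  have hd : Even d := by
    have : Even (d ^ 2) := by
      rw [← hsq]
      exact Finset.even_sum _ fun i _ => by
        obtain ⟨k, hk⟩ := (hm i).2
        exact ⟨2 * k ^ 2, by rw [hk]; ring⟩
    rcases Int.even_or_odd d with h | h
    · exact h
    · exact absurd this (by simpa [pow_two] using (Int.odd_mul.mpr ⟨h, h⟩))
  obtain ⟨e, he⟩ := hd
  obtain ⟨c, hc⟩ := h8
  rw [hval, he] at hc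
  -- so (e+e)^2 + 6(e+e) - 4 = 8c, i.e. 4(e^2+3e-1) = 8c, i.e. e^2+3e-1 = 2c
  have h2 : e ^ 2 + 3 * e - 1 = 2 * c := by nlinarith [hc]
  obtain ⟨l, hl⟩ := Int.even_mul_succ_self e
  have : e ^ 2 + e = l + l := by nlinarith [hl]
  omega
end
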